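/- Let R = k[x_0,...,x_n] and let J be a homogeneous ideal extended from an ideal I of a subring k[ℓ_1,...,ℓ_r] generated by r linearly independent linear forms, where ess(I) = r as an ideal of k[ℓ_1,...,ℓ_r]. Then ess(J) = r. -/

import Mathlib

/-!
Extending an ideal along an algebra map that sends linear forms to linear forms cannot increase
its essential codimension. The inclusion `k[ℓ_1,…,ℓ_r] ⊆ R` is such a map, and so is a retraction
`R → k[ℓ_1,…,ℓ_r]` fixing the `ℓ_i`, which exists because the `ℓ_i` are linearly independent
linear forms. The retraction maps `J = I R` back onto `I`, hence `ess(J) = ess(I) = r`.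
-/

open MvPolynomial

noncomputable section

variable {k : Type*} [Field k]

/-- The essential codimension of an ideal `J` of `k[x_1,…,x_m]`: the minimal `r`
for which there exist linear forms `ℓ_1,…,ℓ_r` such that `J` is generated by elements of
the subring `k[ℓ_1,…,ℓ_r]`. -/
def essCodim {m : ℕ} (J : Ideal (MvPolynomial (Fin m) k)) : ℕ :=
  sInf {r : ℕ | ∃ ℓ : Fin r → MvPolynomial (Fin m) k,
    (∀ i, (ℓ i).IsHomogeneous 1) ∧
    ∃ S : Set (MvPolynomial (Fin m) k),
      S ⊆ (Algebra.adjoin k (Set.range ℓ) : Subalgebra k (MvPolynomial (Fin m) k)) ∧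
      J = Ideal.span S}

def IsGeneratedInLinearForms {m : ℕ} (J : Ideal (MvPolynomial (Fin m) k)) (r : ℕ) : Prop :=
  ∃ ℓ : Fin r → MvPolynomial (Fin m) k,
    (∀ i, (ℓ i).IsHomogeneous 1) ∧
    ∃ S : Set (MvPolynomial (Fin m) k),
      S ⊆ (Algebra.adjoin k (Set.range ℓ) : Subalgebra k (MvPolynomial (Fin m) k)) ∧
      J = Ideal.span S

section IsGeneratedInLinearForms

variable {m : ℕ} {J : Ideal (MvPolynomial (Fin m) k)}

theorem essCodim_le {r : ℕ} (h : IsGeneratedInLinearForms J r) : essCodim J ≤ r :=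
  Nat.sInf_le h

theorem isGeneratedInLinearForms_essCodim : IsGeneratedInLinearForms J (essCodim J) :=
  Nat.sInf_mem (s := {r | IsGeneratedInLinearForms J r})
    ⟨m, X, isHomogeneous_X k, J, by simp [adjoin_range_X], J.span_eq.symm⟩

end IsGeneratedInLinearForms

theorem essCodim_map_le {m m' : ℕ}
    (ψ : MvPolynomial (Fin m) k →ₐ[k] MvPolynomial (Fin m') k)
    (hψ : ∀ i, (ψ (X i)).IsHomogeneous 1) (J : Ideal (MvPolynomial (Fin m) k)) :
    essCodim (J.map ψ) ≤ essCodim J := by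
  obtain ⟨ℓ, hℓ, S, hS, rfl⟩ := isGeneratedInLinearForms_essCodim (J := J)
  refine essCodim_le ⟨ψ ∘ ℓ, fun i => ?_, ψ '' S, ?_, Ideal.map_span _ _⟩
  · simpa [← aeval_unique] using (hℓ i).aeval (ψ ∘ X) hψ
  · rw [Set.range_comp, ← AlgHom.map_adjoin]
    exact Set.image_mono hS

theorem isHomogeneous_linearCombination_X {ι : Type*} (c : ι →₀ k) :
    (Finsupp.linearCombination k (X : ι → MvPolynomial ι k) c).IsHomogeneous 1 := by
  rw [← mem_homogeneousSubmodule, homogeneousSubmodule_one_eq_span_X,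
    ← Finsupp.range_linearCombination]
  exact LinearMap.mem_range_self _ c

theorem exists_retraction_aeval_of_linearIndependent {σ ι : Type*}
    (ℓ : ι → MvPolynomial σ k) (hlin : ∀ i, (ℓ i).IsHomogeneous 1)
    (hindep : LinearIndependent k ℓ) :
    ∃ π : MvPolynomial σ k →ₐ[k] MvPolynomial ι k,
      (∀ j, (π (X j)).IsHomogeneous 1) ∧ π.comp (aeval ℓ) = AlgHom.id k _ := by
  obtain ⟨g, hg⟩ := (Finsupp.linearCombination k ℓ).exists_leftInverse_of_injective
    (LinearMap.ker_eq_bot.mpr hindep)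
  set L := Finsupp.linearCombination k (X : ι → MvPolynomial ι k) ∘ₗ g
  refine ⟨aeval fun j => L (X j), fun j => by
    simpa [L] using isHomogeneous_linearCombination_X (g (X j)), algHom_ext fun i => ?_⟩
  have hπ_eq_L : Set.EqOn (aeval fun j => L (X j)).toLinearMap L
      (Submodule.span k (Set.range (X : σ → MvPolynomial σ k))) := by
    refine LinearMap.eqOn_span' ?_
    rintro _ ⟨j, rfl⟩
    simp
  have hℓ_mem : ℓ i ∈ Submodule.span k (Set.range X) := by
    rw [← homogeneousSubmodule_one_eq_span_X]; exact hlin i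
  have hg_ℓ : g (ℓ i) = Finsupp.single i 1 := by
    simpa using LinearMap.congr_fun hg (Finsupp.single i 1)
  simpa [L, hg_ℓ] using hπ_eq_L hℓ_mem

theorem stmt2_general {n r : ℕ}
    (ℓ : Fin r → MvPolynomial (Fin (n + 1)) k)
    (hlin : ∀ i, (ℓ i).IsHomogeneous 1)
    (hindep : LinearIndependent k ℓ)
    (I : Ideal (MvPolynomial (Fin r) k))
    (hIess : essCodim I = r)
    (J : Ideal (MvPolynomial (Fin (n + 1)) k))
    (hJ : J = I.map (aeval ℓ : MvPolynomial (Fin r) k →ₐ[k] MvPolynomial (Fin (n + 1)) k)) :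
    essCodim J = r := by
  obtain ⟨π, hπ, hπℓ⟩ := exists_retraction_aeval_of_linearIndependent ℓ hlin hindep
  have hI : I = J.map π := by
    rw [hJ, Ideal.map_mapₐ, hπℓ]
    exact (Ideal.map_id I).symm
  refine le_antisymm ?_ ?_
  · calc essCodim J ≤ essCodim I := hJ ▸ essCodim_map_le (aeval ℓ) (by simpa using hlin) I
      _ = r := hIess
  · calc r = essCodim I := hIess.symm
      _ ≤ essCodim J := hI ▸ essCodim_map_le π hπ J

theorem stmt2 {n r : ℕ}
    (ℓ : Fin r → MvPolynomial (Fin (n + 1)) k)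
    (hlin : ∀ i, (ℓ i).IsHomogeneous 1)
    (hindep : LinearIndependent k ℓ)
    (I : Ideal (MvPolynomial (Fin r) k))
    (hIhom : ∃ S : Set (MvPolynomial (Fin r) k),
      (∀ f ∈ S, ∃ e : ℕ, f.IsHomogeneous e) ∧ I = Ideal.span S)
    (hIess : essCodim I = r)
    (J : Ideal (MvPolynomial (Fin (n + 1)) k))
    (hJ : J = I.map (aeval ℓ : MvPolynomial (Fin r) k →ₐ[k] MvPolynomial (Fin (n + 1)) k)) :
    essCodim J = r :=
  stmt2_general ℓ hlin hindep I hIess J hJ
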